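/- arXiv:1609.00420 — 3 statements merged into one kernel-verified Lean document; each statement's English description precedes it below -/
import Mathlib

section
/- Let a, b be positive integers. The von Neumann entropy of the complete bipartite graph K_{a,b} is S(K_{a,b}) = 1 + ((b+1)/(2b))·log₂ a + ((a+1)/(2a))·log₂ b − ((a+b)/(2ab))·log₂(a+b). -/
open Matrix Real Finset

namespace VNE

variable {V : Type*} [Fintype V] [DecidableEq V]

/-- The density matrix `ρ(G) = L(G) / tr (L(G))` of a graph. -/
noncomputable def rho (G : SimpleGraph V) : Matrix V V ℝ :=
  letI := Classical.decRel G.Adj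
  ((G.lapMatrix ℝ).trace)⁻¹ • G.lapMatrix ℝ

lemma rho_isHermitian (G : SimpleGraph V) : (rho G).IsHermitian := by
  letI := Classical.decRel G.Adj
  have h : (G.lapMatrix ℝ).IsHermitian := (SimpleGraph.posSemidef_lapMatrix ℝ G).1
  unfold rho
  unfold Matrix.IsHermitian at h ⊢
  rw [Matrix.conjTranspose_smul, h, star_trivial]

/-- The eigenvalues of the density matrix of `G`. -/
noncomputable def eigs (G : SimpleGraph V) : V → ℝ :=
  (rho_isHermitian G).eigenvalues

/-- The von Neumann entropy of a graph. -/
noncomputable def vnEntropy (G : SimpleGraph V) : ℝ :=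
  ∑ v, -(eigs G v * Real.logb 2 (eigs G v))

/-- The Rényi α-entropy of a graph. -/
noncomputable def renyiEntropy (α : ℝ) (G : SimpleGraph V) : ℝ :=
  (1 / (1 - α)) * Real.logb 2 (∑ v, eigs G v ^ α)

/-- The Rényi 2-entropy of a graph, `−log₂ tr(ρ(G)²)`. -/
noncomputable def renyi2 (G : SimpleGraph V) : ℝ :=
  - Real.logb 2 ((rho G * rho G).trace)

/-- `tr₂(G) = tr(ρ(G)²)`. -/
noncomputable def tr2 (G : SimpleGraph V) : ℝ :=
  (rho G * rho G).trace

/-- The degree of a vertex, as a real number. -/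
noncomputable def deg (G : SimpleGraph V) (v : V) : ℝ :=
  letI := Classical.decRel G.Adj
  (G.degree v : ℝ)

/-- The degree sum `d_G` of a graph. -/
noncomputable def degSum (G : SimpleGraph V) : ℝ :=
  ∑ v, deg G v

/-- The star `K_{1,n-1}` on `n` vertices, with center the vertex `0`. -/
def starOn (n : ℕ) : SimpleGraph (Fin n) where
  Adj x y := x ≠ y ∧ (x.val = 0 ∨ y.val = 0)
  symm := ⟨fun _ _ h => ⟨h.1.symm, h.2.symm⟩⟩
  loopless := ⟨fun _ h => h.1 rfl⟩


section Machinery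
open Polynomial
/- ## Generic spectral machinery -/

lemma charpoly_diag {n R : Type*} [Fintype n] [DecidableEq n] [CommRing R] (d : n → R) :
    (Matrix.diagonal d).charpoly = ∏ i, (X - C (d i)) := by
  rw [Matrix.charpoly]
  have : charmatrix (Matrix.diagonal d) = Matrix.diagonal fun i => (X : R[X]) - C (d i) := by
    ext i j
    by_cases h : i = j
    · subst h; simp [charmatrix_apply_eq]
    · simp [charmatrix_apply_ne _ _ _ h, Matrix.diagonal_apply_ne _ h]
  rw [this, Matrix.det_diagonal]

lemma charmatrix_eq {n R : Type*} [Fintype n] [DecidableEq n] [CommRing R] (M : Matrix n n R) :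
    charmatrix M = (X : R[X]) • (1 : Matrix n n R[X]) - M.map C := by
  ext i j
  by_cases h : i = j
  · subst h; simp [charmatrix_apply_eq]
  · simp [charmatrix_apply_ne _ _ _ h, Matrix.one_apply_ne h]

lemma charpoly_similar {n R : Type*} [Fintype n] [DecidableEq n] [CommRing R]
    (M P Q : Matrix n n R) (h : Q * P = 1) :
    (P * M * Q).charpoly = M.charpoly := by
  have hPQ : P * Q = 1 := mul_eq_one_comm.mp h
  have hmap : ∀ (A B : Matrix n n R), (A * B).map (C : R →+* R[X]) = A.map C * B.map C := by
    intro A B; exact Matrix.map_mul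
  have key : charmatrix (P * M * Q) = P.map C * charmatrix M * Q.map C := by
    rw [charmatrix_eq, charmatrix_eq, hmap, hmap]
    rw [Matrix.mul_sub, Matrix.sub_mul]
    congr 1
    rw [Matrix.mul_smul, Matrix.mul_one, Matrix.smul_mul, ← hmap, hPQ]
    simp
  rw [Matrix.charpoly, key, Matrix.det_mul, Matrix.det_mul, Matrix.charpoly]
  rw [mul_comm (P.map C).det, mul_assoc, ← Matrix.det_mul, ← hmap, hPQ]
  simp

lemma charpoly_hermitian {n : Type*} [Fintype n] [DecidableEq n]
    {A : Matrix n n ℝ} (hA : A.IsHermitian) :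
    A.charpoly = ∏ i, (X - C (hA.eigenvalues i)) := by
  have hU : star (hA.eigenvectorUnitary : Matrix n n ℝ) * (hA.eigenvectorUnitary : Matrix n n ℝ)
      = 1 := by
    simpa using (Matrix.mem_unitaryGroup_iff'.mp hA.eigenvectorUnitary.2)
  have hst := hA.spectral_theorem
  have hco : (RCLike.ofReal ∘ hA.eigenvalues : n → ℝ) = hA.eigenvalues := rfl
  rw [hco] at hst
  calc A.charpoly
      = ((hA.eigenvectorUnitary : Matrix n n ℝ) * Matrix.diagonal hA.eigenvalues *
        star (hA.eigenvectorUnitary : Matrix n n ℝ)).charpoly := by exact congrArg Matrix.charpoly hst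
    _ = ∏ i, (X - C (hA.eigenvalues i)) := by rw [charpoly_similar _ _ _ hU, charpoly_diag]

lemma sum_f_eigs {n : Type*} [Fintype n] [DecidableEq n]
    {A : Matrix n n ℝ} (hA : A.IsHermitian) (P Q : Matrix n n ℝ) (d : n → ℝ)
    (hQP : Q * P = 1) (hAP : A * P = P * Matrix.diagonal d) (f : ℝ → ℝ) :
    ∑ i, f (hA.eigenvalues i) = ∑ i, f (d i) := by
  have hA' : A = P * Matrix.diagonal d * Q := by
    have hPQ : P * Q = 1 := mul_eq_one_comm.mp hQP
    calc A = A * (P * Q) := by rw [hPQ, mul_one]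
    _ = (A * P) * Q := by rw [mul_assoc]
    _ = P * Matrix.diagonal d * Q := by rw [hAP]
  have hcp : (∏ i, ((X : ℝ[X]) - C (hA.eigenvalues i))) = ∏ i, (X - C (d i)) := by
    rw [← charpoly_hermitian hA]
    conv_lhs => rw [hA']
    rw [charpoly_similar _ _ _ hQP, charpoly_diag]
  have hms : (Finset.univ.val.map hA.eigenvalues) = Finset.univ.val.map d := by
    have h1 := Polynomial.roots_multiset_prod_X_sub_C (Finset.univ.val.map hA.eigenvalues)
    have h2 := Polynomial.roots_multiset_prod_X_sub_C (Finset.univ.val.map d)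
    rw [← h1, ← h2]
    congr 1
    rw [Multiset.map_map, Multiset.map_map]
    calc ((Finset.univ.val.map fun i => (X:ℝ[X]) - C (hA.eigenvalues i))).prod
        = ∏ i, ((X:ℝ[X]) - C (hA.eigenvalues i)) := rfl
      _ = ∏ i, ((X:ℝ[X]) - C (d i)) := hcp
      _ = ((Finset.univ.val.map fun i => (X:ℝ[X]) - C (d i))).prod := rfl
  calc ∑ i, f (hA.eigenvalues i) = ((Finset.univ.val.map hA.eigenvalues).map f).sum := by
        rw [Multiset.map_map]; rfl
    _ = ((Finset.univ.val.map d).map f).sum := by rw [hms]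
    _ = ∑ i, f (d i) := by rw [Multiset.map_map]; rfl


end Machinery

section Concrete
open Polynomial
variable (a b : ℕ) (ha : 0 < a) (hb : 0 < b)

noncomputable def Pm : Matrix (Fin a ⊕ Fin b) (Fin a ⊕ Fin b) ℝ :=
  Matrix.of fun v w =>
    match v, w with
    | .inl k, .inl i => if i.val = 0 then 1 else
        (if k = i then (1:ℝ) else 0) - (if k.val = 0 then 1 else 0)
    | .inr _, .inl i => if i.val = 0 then 1 else 0
    | .inl _, .inr j => if j.val = 0 then (b:ℝ) else 0
    | .inr l, .inr j => if j.val = 0 then -(a:ℝ) else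
        (if l = j then (1:ℝ) else 0) - (if l.val = 0 then 1 else 0)

noncomputable def Qm : Matrix (Fin a ⊕ Fin b) (Fin a ⊕ Fin b) ℝ :=
  Matrix.of fun w v =>
    match w, v with
    | .inl i, .inl k => if i.val = 0 then ((a:ℝ)+b)⁻¹ else
        (if i = k then (1:ℝ) else 0) - (a:ℝ)⁻¹
    | .inl i, .inr _ => if i.val = 0 then ((a:ℝ)+b)⁻¹ else 0
    | .inr j, .inl _ => if j.val = 0 then ((a:ℝ)*((a:ℝ)+b))⁻¹ else 0
    | .inr j, .inr l => if j.val = 0 then -((b:ℝ)*((a:ℝ)+b))⁻¹ else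
        (if j = l then (1:ℝ) else 0) - (b:ℝ)⁻¹

noncomputable def Dm : Fin a ⊕ Fin b → ℝ :=
  Sum.elim (fun i => if i.val = 0 then 0 else (b:ℝ))
           (fun j => if j.val = 0 then (a:ℝ)+b else (a:ℝ))


noncomputable def dm : Fin a ⊕ Fin b → ℝ :=
  Sum.elim (fun i => if i.val = 0 then 0 else (2*(a:ℝ))⁻¹)
           (fun j => if j.val = 0 then ((a:ℝ)+b)/(2*a*b) else (2*(b:ℝ))⁻¹)

noncomputable def Lm : Matrix (Fin a ⊕ Fin b) (Fin a ⊕ Fin b) ℝ :=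
  Matrix.of fun v w =>
    match v, w with
    | .inl i, .inl i' => if i = i' then (b:ℝ) else 0
    | .inl _, .inr _ => -1
    | .inr _, .inl _ => -1
    | .inr j, .inr j' => if j = j' then (a:ℝ) else 0

lemma val_zero_iff {n : ℕ} (hn : 0 < n) (i : Fin n) : i.val = 0 ↔ i = ⟨0, hn⟩ := by
  rw [Fin.ext_iff]

lemma sum_indv {n : ℕ} (hn : 0 < n) (c : ℝ) :
    ∑ x : Fin n, (if x.val = 0 then c else 0) = c := by
  simp_rw [val_zero_iff hn]
  rw [Finset.sum_ite_eq' Finset.univ _ (fun _ => c)]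
  simp

lemma sum_indl {n : ℕ} (i : Fin n) (c : ℝ) :
    ∑ x : Fin n, (if x = i then c else 0) = c := by
  rw [Finset.sum_ite_eq' Finset.univ _ (fun _ => c)]; simp

lemma sum_indr {n : ℕ} (i : Fin n) (c : ℝ) :
    ∑ x : Fin n, (if i = x then c else 0) = c := by
  rw [Finset.sum_ite_eq Finset.univ _ (fun _ => c)]; simp


lemma fin_sum_ite {n : ℕ} (hn : 0 < n) (c₁ c₂ : ℝ) :
    ∑ i : Fin n, (if i.val = 0 then c₁ else c₂) = c₁ + ((n:ℝ) - 1) * c₂ := by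
  simp_rw [val_zero_iff hn]
  have h : ∀ i : Fin n, (if i = (⟨0, hn⟩ : Fin n) then c₁ else c₂)
      = (if i = (⟨0, hn⟩ : Fin n) then c₁ - c₂ else 0) + c₂ := by
    intro i; split_ifs <;> ring
  simp_rw [h]
  rw [Finset.sum_add_distrib, Finset.sum_ite_eq' Finset.univ _ (fun _ => c₁ - c₂)]
  simp
  ring

include ha hb in
lemma QP_eq_one : Qm a b * Pm a b = 1 := by
  have hA : ((a:ℝ)) ≠ 0 := Nat.cast_ne_zero.mpr ha.ne'
  have hB : ((b:ℝ)) ≠ 0 := Nat.cast_ne_zero.mpr hb.ne'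
  have hAB : ((a:ℝ)) + b ≠ 0 := by positivity
  ext w w'
  rw [Matrix.mul_apply, Fintype.sum_sum_type]
  obtain i | j := w <;> obtain i' | j' := w' <;>
    simp only [Pm, Qm, Matrix.of_apply, Matrix.one_apply, Sum.inl.injEq, Sum.inr.injEq,
      reduceCtorEq]
  · simp only [val_zero_iff ha, val_zero_iff hb]
    by_cases h1 : i = ⟨0, ha⟩ <;> by_cases h2 : i' = ⟨0, ha⟩ <;>
      (try simp [h1, h2, mul_sub, sub_mul, mul_ite, ite_mul, Finset.sum_sub_distrib,
        Finset.sum_ite_eq, Finset.sum_ite_eq', Finset.sum_const, Finset.card_univ]) <;>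
      (try simp [eq_comm, h1, h2]) <;> (try field_simp) <;> (try ring1)
  · simp only [val_zero_iff ha, val_zero_iff hb]
    by_cases h1 : i = ⟨0, ha⟩ <;> by_cases h2 : j' = ⟨0, hb⟩ <;>
      (try simp [h1, h2, mul_sub, sub_mul, mul_ite, ite_mul, Finset.sum_sub_distrib,
        Finset.sum_ite_eq, Finset.sum_ite_eq', Finset.sum_const, Finset.card_univ]) <;>
      (try simp [eq_comm, h1, h2]) <;> (try field_simp) <;> (try ring1)
  · simp only [val_zero_iff ha, val_zero_iff hb]
    by_cases h1 : j = ⟨0, hb⟩ <;> by_cases h2 : i' = ⟨0, ha⟩ <;>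
      (try simp [h1, h2, mul_sub, sub_mul, mul_ite, ite_mul, Finset.sum_sub_distrib,
        Finset.sum_ite_eq, Finset.sum_ite_eq', Finset.sum_const, Finset.card_univ]) <;>
      (try simp [eq_comm, h1, h2]) <;> (try field_simp) <;> (try ring1)
  · simp only [val_zero_iff ha, val_zero_iff hb]
    by_cases h1 : j = ⟨0, hb⟩ <;> by_cases h2 : j' = ⟨0, hb⟩ <;>
      (try simp [h1, h2, mul_sub, sub_mul, mul_ite, ite_mul, Finset.sum_sub_distrib,
        Finset.sum_ite_eq, Finset.sum_ite_eq', Finset.sum_const, Finset.card_univ]) <;>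
      (try simp [eq_comm, h1, h2]) <;> (try field_simp) <;> (try ring1)

include ha hb in
lemma LP_eq : Lm a b * Pm a b = Pm a b * Matrix.diagonal (Dm a b) := by
  have hA : ((a:ℝ)) ≠ 0 := Nat.cast_ne_zero.mpr ha.ne'
  have hB : ((b:ℝ)) ≠ 0 := Nat.cast_ne_zero.mpr hb.ne'
  have hAB : ((a:ℝ)) + b ≠ 0 := by positivity
  ext w w'
  rw [Matrix.mul_apply, Fintype.sum_sum_type, Matrix.mul_diagonal]
  obtain k | l := w <;> obtain i' | j' := w' <;>
    simp only [Pm, Lm, Dm, Matrix.of_apply, Sum.elim_inl, Sum.elim_inr]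
  · simp only [val_zero_iff ha, val_zero_iff hb]
    by_cases h1 : k = ⟨0, ha⟩ <;> by_cases h2 : i' = ⟨0, ha⟩ <;>
      (try simp [h1, h2, mul_sub, sub_mul, mul_ite, ite_mul, Finset.sum_sub_distrib,
        Finset.sum_ite_eq, Finset.sum_ite_eq', Finset.sum_const, Finset.card_univ]) <;>
      (try simp [eq_comm, h1, h2]) <;> (try field_simp) <;> (try ring1)
  · simp only [val_zero_iff ha, val_zero_iff hb]
    by_cases h1 : k = ⟨0, ha⟩ <;> by_cases h2 : j' = ⟨0, hb⟩ <;>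
      (try simp [h1, h2, mul_sub, sub_mul, mul_ite, ite_mul, Finset.sum_sub_distrib,
        Finset.sum_ite_eq, Finset.sum_ite_eq', Finset.sum_const, Finset.card_univ]) <;>
      (try simp [eq_comm, h1, h2]) <;> (try field_simp) <;> (try ring1)
  · simp only [val_zero_iff ha, val_zero_iff hb]
    by_cases h1 : l = ⟨0, hb⟩ <;> by_cases h2 : i' = ⟨0, ha⟩ <;>
      (try simp [h1, h2, mul_sub, sub_mul, mul_ite, ite_mul, Finset.sum_sub_distrib,
        Finset.sum_ite_eq, Finset.sum_ite_eq', Finset.sum_const, Finset.card_univ]) <;>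
      (try simp [eq_comm, h1, h2]) <;> (try field_simp) <;> (try ring1)
  · simp only [val_zero_iff ha, val_zero_iff hb]
    by_cases h1 : l = ⟨0, hb⟩ <;> by_cases h2 : j' = ⟨0, hb⟩ <;>
      (try simp [h1, h2, mul_sub, sub_mul, mul_ite, ite_mul, Finset.sum_sub_distrib,
        Finset.sum_ite_eq, Finset.sum_ite_eq', Finset.sum_const, Finset.card_univ]) <;>
      (try simp [eq_comm, h1, h2]) <;> (try field_simp) <;> (try ring1)


include ha hb in
lemma trace_Lm : (Lm a b).trace = 2*(a:ℝ)*b := by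
  rw [Matrix.trace]
  rw [Fintype.sum_sum_type]
  simp [Matrix.diag, Lm]
  ring

lemma deg_inl {G : SimpleGraph (Fin a ⊕ Fin b)}
    (hG : G = completeBipartiteGraph (Fin a) (Fin b)) [DecidableRel G.Adj] (i : Fin a) :
    G.degree (Sum.inl i) = b := by
  subst hG
  have : (completeBipartiteGraph (Fin a) (Fin b)).neighborFinset (Sum.inl i)
      = Finset.univ.map ⟨Sum.inr, Sum.inr_injective⟩ := by
    ext w; cases w <;> simp [SimpleGraph.mem_neighborFinset]
  rw [SimpleGraph.degree, this]; simp

lemma deg_inr {G : SimpleGraph (Fin a ⊕ Fin b)}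
    (hG : G = completeBipartiteGraph (Fin a) (Fin b)) [DecidableRel G.Adj] (j : Fin b) :
    G.degree (Sum.inr j) = a := by
  subst hG
  have : (completeBipartiteGraph (Fin a) (Fin b)).neighborFinset (Sum.inr j)
      = Finset.univ.map ⟨Sum.inl, Sum.inl_injective⟩ := by
    ext w; cases w <;> simp [SimpleGraph.mem_neighborFinset]
  rw [SimpleGraph.degree, this]; simp

lemma lap_eq {G : SimpleGraph (Fin a ⊕ Fin b)}
    (hG : G = completeBipartiteGraph (Fin a) (Fin b)) [DecidableRel G.Adj] :
    G.lapMatrix ℝ = Lm a b := by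
  ext v w
  rcases v with i | j <;> rcases w with i' | j' <;>
    simp [SimpleGraph.lapMatrix, SimpleGraph.degMatrix, Matrix.diagonal_apply, Lm,
      deg_inl a b hG, deg_inr a b hG, hG, Sum.inl.injEq, apply_ite] <;>
    split_ifs <;> simp_all

include ha hb in
lemma rho_eq : rho (completeBipartiteGraph (Fin a) (Fin b)) = (2*(a:ℝ)*b)⁻¹ • Lm a b := by
  unfold rho
  have hl := @lap_eq a b (completeBipartiteGraph (Fin a) (Fin b)) rfl (Classical.decRel _)
  rw [hl, trace_Lm a b ha hb]

include ha hb in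
lemma rhoP_eq : rho (completeBipartiteGraph (Fin a) (Fin b)) * Pm a b
    = Pm a b * Matrix.diagonal (dm a b) := by
  have hA : ((a:ℝ)) ≠ 0 := Nat.cast_ne_zero.mpr ha.ne'
  have hB : ((b:ℝ)) ≠ 0 := Nat.cast_ne_zero.mpr hb.ne'
  have hd : (2*(a:ℝ)*b)⁻¹ • Matrix.diagonal (Dm a b) = Matrix.diagonal (dm a b) := by
    ext v w
    rw [Matrix.smul_apply]
    by_cases hvw : v = w
    · subst hvw
      rw [Matrix.diagonal_apply_eq, Matrix.diagonal_apply_eq]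
      obtain i | j := v <;>
        simp only [Dm, dm, Sum.elim_inl, Sum.elim_inr, smul_eq_mul] <;>
        split_ifs <;> field_simp <;> ring
    · rw [Matrix.diagonal_apply_ne _ hvw, Matrix.diagonal_apply_ne _ hvw, smul_zero]
  rw [rho_eq a b ha hb, Matrix.smul_mul, LP_eq a b ha hb, ← Matrix.mul_smul, hd]

end Concrete

theorem vnEntropy_completeBipartite (a b : ℕ) (ha : 0 < a) (hb : 0 < b) :
    vnEntropy (completeBipartiteGraph (Fin a) (Fin b)) =
      1 + (((b : ℝ) + 1) / (2 * b)) * Real.logb 2 a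
        + (((a : ℝ) + 1) / (2 * a)) * Real.logb 2 b
        - (((a : ℝ) + b) / (2 * a * b)) * Real.logb 2 ((a : ℝ) + b) := by
  have hA : ((a:ℝ)) ≠ 0 := Nat.cast_ne_zero.mpr ha.ne'
  have hB : ((b:ℝ)) ≠ 0 := Nat.cast_ne_zero.mpr hb.ne'
  have hAB : ((a:ℝ)) + b ≠ 0 := by positivity
  set G := completeBipartiteGraph (Fin a) (Fin b) with hG
  have key := sum_f_eigs (rho_isHermitian G) (Pm a b) (Qm a b) (dm a b)
    (QP_eq_one a b ha hb) (rhoP_eq a b ha hb) (fun x => -(x * Real.logb 2 x))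
  have h0 : vnEntropy G = ∑ i, (fun x => -(x * Real.logb 2 x)) (eigs G i) := rfl
  rw [h0]
  unfold eigs
  rw [key]
  rw [Fintype.sum_sum_type]
  have e1 : Real.logb 2 ((2*(a:ℝ))⁻¹) = -(1 + Real.logb 2 a) := by
    rw [Real.logb_inv, Real.logb_mul two_ne_zero hA]
    simp
  have e2 : Real.logb 2 ((2*(b:ℝ))⁻¹) = -(1 + Real.logb 2 b) := by
    rw [Real.logb_inv, Real.logb_mul two_ne_zero hB]
    simp
  have e3 : Real.logb 2 (((a:ℝ)+b)/(2*a*b))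
      = Real.logb 2 ((a:ℝ)+b) - (1 + Real.logb 2 a + Real.logb 2 b) := by
    rw [Real.logb_div hAB (by positivity), Real.logb_mul (by positivity) hB,
      Real.logb_mul two_ne_zero hA]
    simp
    try ring
  have s1 : ∑ i : Fin a, (fun x => -(x * Real.logb 2 x)) (dm a b (Sum.inl i))
      = 0 + ((a:ℝ) - 1) * -((2*(a:ℝ))⁻¹ * Real.logb 2 ((2*(a:ℝ))⁻¹)) := by
    rw [← fin_sum_ite ha]
    apply Finset.sum_congr rfl
    intro i _
    simp only [dm, Sum.elim_inl]
    split_ifs <;> simp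
  have s2 : ∑ j : Fin b, (fun x => -(x * Real.logb 2 x)) (dm a b (Sum.inr j))
      = -(((a:ℝ)+b)/(2*a*b) * Real.logb 2 (((a:ℝ)+b)/(2*a*b)))
        + ((b:ℝ) - 1) * -((2*(b:ℝ))⁻¹ * Real.logb 2 ((2*(b:ℝ))⁻¹)) := by
    rw [← fin_sum_ite hb]
    apply Finset.sum_congr rfl
    intro j _
    simp only [dm, Sum.elim_inr]
    split_ifs <;> simp
  rw [s1, s2, e1, e2, e3]
  field_simp
  ring

end VNE
end

section
/- Let n ≥ 2 be an integer. The von Neumann entropy of the star K_{1,n−1} on n vertices is S(K_{1,n−1}) = log₂(2n−2) − (n/(2n−2))·log₂ n. -/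
open Matrix Real Finset

namespace VNE

variable {V : Type*} [Fintype V] [DecidableEq V]

/-! ### Auxiliary material for `vnEntropy_star` -/

lemma vmv_mul {W : Type*} [Fintype W] (a b c d : W → ℝ) :
    vecMulVec a b * vecMulVec c d = (b ⬝ᵥ c) • vecMulVec a d := by
  ext i j
  simp only [Matrix.mul_apply, vecMulVec_apply, Matrix.smul_apply, dotProduct, smul_eq_mul,
    Finset.sum_mul]
  exact Finset.sum_congr rfl fun k _ => by ring

lemma trace_vmv {W : Type*} [Fintype W] (a b : W → ℝ) :
    (vecMulVec a b).trace = a ⬝ᵥ b := by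
  simp [Matrix.trace, Matrix.diag, vecMulVec_apply, dotProduct]

lemma trace_eq_sum_eigs {W : Type*} [Fintype W] [DecidableEq W] {A : Matrix W W ℝ}
    (hA : A.IsHermitian) : A.trace = ∑ i, hA.eigenvalues i := by
  have h1 : star (hA.eigenvectorUnitary : Matrix W W ℝ) * (hA.eigenvectorUnitary : Matrix W W ℝ)
      = 1 := mem_unitaryGroup_iff'.mp hA.eigenvectorUnitary.2
  conv_lhs => rw [hA.spectral_theorem, Unitary.conjStarAlgAut_apply]
  rw [Matrix.trace_mul_cycle, h1, one_mul, trace_diagonal]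
  simp

lemma trace_sq_eq_sum_eigs_sq {W : Type*} [Fintype W] [DecidableEq W] {A : Matrix W W ℝ}
    (hA : A.IsHermitian) : (A * A).trace = ∑ i, hA.eigenvalues i ^ 2 := by
  have h1 : star (hA.eigenvectorUnitary : Matrix W W ℝ) * (hA.eigenvectorUnitary : Matrix W W ℝ)
      = 1 := mem_unitaryGroup_iff'.mp hA.eigenvectorUnitary.2
  have h1' : ∀ B : Matrix W W ℝ, star (hA.eigenvectorUnitary : Matrix W W ℝ)
      * ((hA.eigenvectorUnitary : Matrix W W ℝ) * B) = B := fun B => by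
    rw [← mul_assoc, h1, one_mul]
  set U : Matrix W W ℝ := (hA.eigenvectorUnitary : Matrix W W ℝ)
  set D : Matrix W W ℝ := diagonal (RCLike.ofReal ∘ hA.eigenvalues)
  have key : A * A = U * (D * D) * star U := by
    conv_lhs => rw [hA.spectral_theorem, Unitary.conjStarAlgAut_apply]
    change U * D * star U * (U * D * star U) = _
    simp only [mul_assoc, h1']
  rw [key, Matrix.trace_mul_cycle, h1, one_mul]
  simp [D, diagonal_mul_diagonal, trace_diagonal, pow_two]

variable (n : ℕ)

noncomputable def uu : Fin n → ℝ := fun i => if i.val = 0 then 1 else 0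
noncomputable def ee : Fin n → ℝ := fun _ => 1

lemma sum_ind (hn : 2 ≤ n) : ∑ i : Fin n, (if i.val = 0 then (1:ℝ) else 0) = 1 := by
  have h0 : ∀ i : Fin n, (i.val = 0) ↔ (i = (⟨0, by omega⟩ : Fin n)) := fun i => by
    simp [Fin.ext_iff]
  simp_rw [h0]
  simp

lemma dot_uu_uu (hn : 2 ≤ n) : uu n ⬝ᵥ uu n = 1 := by
  have : ∀ i : Fin n, uu n i * uu n i = if i.val = 0 then (1:ℝ) else 0 := fun i => by
    by_cases h : i.val = 0 <;> simp [uu, h]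
  simp_rw [dotProduct, this]
  exact sum_ind n hn

lemma dot_uu_ee (hn : 2 ≤ n) : uu n ⬝ᵥ ee n = 1 := by
  simp only [dotProduct, uu, ee, mul_one]
  exact sum_ind n hn

lemma dot_ee_uu (hn : 2 ≤ n) : ee n ⬝ᵥ uu n = 1 := by
  simp only [dotProduct, uu, ee, one_mul]
  exact sum_ind n hn

lemma dot_ee_ee : ee n ⬝ᵥ ee n = n := by
  simp [dotProduct, ee]

noncomputable def Xm : Matrix (Fin n) (Fin n) ℝ := vecMulVec (uu n) (uu n)
noncomputable def Ym : Matrix (Fin n) (Fin n) ℝ := vecMulVec (ee n) (uu n)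
noncomputable def Zm : Matrix (Fin n) (Fin n) ℝ := vecMulVec (uu n) (ee n)

lemma deg0 (hn : 2 ≤ n) [DecidableRel (starOn n).Adj] (i : Fin n) (hi : i.val = 0) :
    (((starOn n).degree i : ℝ)) = n - 1 := by
  rw [SimpleGraph.degree_eq_sum_if_adj]
  have h : ∀ j : Fin n, (if (starOn n).Adj i j then (1:ℝ) else 0)
      = 1 - if j.val = 0 then 1 else 0 := by
    intro j
    by_cases hj : j = i
    · subst hj; simp [starOn, hi]
    · have : (starOn n).Adj i j := (show i ≠ j ∧ (i.val = 0 ∨ j.val = 0) from ⟨Ne.symm hj, Or.inl hi⟩)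
      rw [if_pos this]
      have : ¬ j.val = 0 := by
        intro h0
        exact hj (Fin.ext (h0.trans hi.symm))
      simp [this]
  rw [Finset.sum_congr rfl (fun j _ => h j), Finset.sum_sub_distrib, sum_ind n hn]
  simp

lemma deg1 (hn : 2 ≤ n) [DecidableRel (starOn n).Adj] (i : Fin n) (hi : ¬ i.val = 0) :
    (((starOn n).degree i : ℝ)) = 1 := by
  rw [SimpleGraph.degree_eq_sum_if_adj]
  have h : ∀ j : Fin n, (if (starOn n).Adj i j then (1:ℝ) else 0)
      = if j.val = 0 then 1 else 0 := by
    intro j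
    by_cases hj : j.val = 0
    · have : (starOn n).Adj i j := (show i ≠ j ∧ (i.val = 0 ∨ j.val = 0) from ⟨fun h => hi (h ▸ hj), Or.inr hj⟩)
      simp [this, hj]
    · have : ¬ (starOn n).Adj i j := fun h => (show i ≠ j ∧ (i.val = 0 ∨ j.val = 0) from h).2.elim hi hj
      simp [this, hj]
  rw [Finset.sum_congr rfl (fun j _ => h j)]
  exact sum_ind n hn

lemma lap_eq_s1 (hn : 2 ≤ n) [DecidableRel (starOn n).Adj] :
    (starOn n).lapMatrix ℝ = 1 + (n:ℝ) • Xm n - Ym n - Zm n := by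
  ext i j
  simp only [SimpleGraph.lapMatrix, SimpleGraph.degMatrix, Matrix.sub_apply, Matrix.add_apply,
    Matrix.diagonal_apply, SimpleGraph.adjMatrix_apply, Matrix.one_apply, Matrix.smul_apply,
    Xm, Ym, Zm, vecMulVec_apply, uu, ee, smul_eq_mul]
  by_cases hij : i = j
  · subst hij
    by_cases hi : i.val = 0
    · rw [deg0 n hn i hi]
      simp [starOn, hi]
    · rw [deg1 n hn i hi]
      simp [starOn, hi]
  · by_cases hi : i.val = 0 <;> by_cases hj : j.val = 0
    · exact absurd (Fin.ext (hi.trans hj.symm)) hij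
    · have : (starOn n).Adj i j := (show i ≠ j ∧ (i.val = 0 ∨ j.val = 0) from ⟨hij, Or.inl hi⟩)
      simp [this, hij, hi, hj]
    · have : (starOn n).Adj i j := (show i ≠ j ∧ (i.val = 0 ∨ j.val = 0) from ⟨hij, Or.inr hj⟩)
      simp [this, hij, hi, hj]
    · have : ¬ (starOn n).Adj i j := fun h => (show i ≠ j ∧ (i.val = 0 ∨ j.val = 0) from h).2.elim hi hj
      simp [this, hij, hi, hj]

lemma annihilate (hn : 2 ≤ n) [DecidableRel (starOn n).Adj] :
    ((starOn n).lapMatrix ℝ) * ((starOn n).lapMatrix ℝ - 1)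
      * ((starOn n).lapMatrix ℝ - (n:ℝ) • 1) = 0 := by
  rw [lap_eq_s1 n hn]
  simp only [Xm, Ym, Zm]
  simp only [mul_sub, sub_mul, mul_add, add_mul, smul_mul_assoc, mul_smul_comm,
    Matrix.one_mul, Matrix.mul_one, smul_smul, vmv_mul,
    dot_uu_uu n hn, dot_uu_ee n hn, dot_ee_uu n hn, dot_ee_ee n, one_smul]
  module

lemma trace_lap (hn : 2 ≤ n) [DecidableRel (starOn n).Adj] :
    ((starOn n).lapMatrix ℝ).trace = 2 * n - 2 := by
  rw [lap_eq_s1 n hn]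
  simp only [Xm, Ym, Zm, trace_add, trace_sub, trace_smul, trace_one, trace_vmv,
    dot_uu_uu n hn, dot_uu_ee n hn, dot_ee_uu n hn, smul_eq_mul]
  rw [Fintype.card_fin]
  ring

lemma trace_lap_sq (hn : 2 ≤ n) [DecidableRel (starOn n).Adj] :
    (((starOn n).lapMatrix ℝ) * ((starOn n).lapMatrix ℝ)).trace = n ^ 2 + n - 2 := by
  rw [lap_eq_s1 n hn]
  simp only [Xm, Ym, Zm]
  simp only [mul_sub, sub_mul, mul_add, add_mul, smul_mul_assoc, mul_smul_comm,
    Matrix.one_mul, Matrix.mul_one, smul_smul, vmv_mul,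
    dot_uu_uu n hn, dot_uu_ee n hn, dot_ee_uu n hn, dot_ee_ee n, one_smul]
  simp only [trace_add, trace_sub, trace_smul, trace_one, trace_vmv,
    dot_uu_uu n hn, dot_uu_ee n hn, dot_ee_uu n hn, dot_ee_ee n, smul_eq_mul]
  rw [Fintype.card_fin]
  ring

theorem vnEntropy_star (n : ℕ) (hn : 2 ≤ n) :
    vnEntropy (starOn n) =
      Real.logb 2 (2 * (n : ℝ) - 2) - ((n : ℝ) / (2 * n - 2)) * Real.logb 2 n := by
  letI : DecidableRel (starOn n).Adj := Classical.decRel _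
  set N : ℝ := (n : ℝ) with hN
  have hN2 : (2:ℝ) ≤ N := by rw [hN]; exact_mod_cast hn
  have hdenpos : (0:ℝ) < 2 * N - 2 := by linarith
  have hden : 2 * N - 2 ≠ 0 := ne_of_gt hdenpos
  set c : ℝ := (2 * N - 2)⁻¹ with hc
  have hcpos : 0 < c := inv_pos.mpr hdenpos
  have hcne : c ≠ 0 := ne_of_gt hcpos
  set L : Matrix (Fin n) (Fin n) ℝ := (starOn n).lapMatrix ℝ with hLdef
  have htr : L.trace = 2 * N - 2 := trace_lap n hn
  have hrho : rho (starOn n) = c • L := by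
    have : rho (starOn n) = (L.trace)⁻¹ • L := rfl
    rw [this, htr]
  -- the annihilating identity for rho
  have hmat : rho (starOn n) * (rho (starOn n) - c • 1) * (rho (starOn n) - (N * c) • 1) = 0 := by
    have e1 : c • L - c • (1 : Matrix (Fin n) (Fin n) ℝ) = c • (L - 1) := (smul_sub c L 1).symm
    have e2 : c • L - (N * c) • (1 : Matrix (Fin n) (Fin n) ℝ) = c • (L - N • 1) := by
      rw [smul_sub, smul_smul, mul_comm]
    rw [hrho, e1, e2]
    have e3 : (c • L) * (c • (L - 1)) * (c • (L - N • 1))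
        = (c * c * c) • (L * (L - 1) * (L - N • 1)) := by
      simp only [smul_mul_assoc, mul_smul_comm, smul_smul]
      congr 1
      ring
    rw [e3, hLdef, annihilate n hn, smul_zero]
  set t : Fin n → ℝ := eigs (starOn n) with htdef
  have hherm : (rho (starOn n)).IsHermitian := rho_isHermitian (starOn n)
  have hteq : t = hherm.eigenvalues := rfl
  -- each eigenvalue satisfies the cubic
  have hcubic : ∀ i, t i * (t i - c) * (t i - N * c) = 0 := by
    intro i
    have hv := hherm.mulVec_eigenvectorBasis i
    rw [← hteq] at hv
    set v := ⇑(hherm.eigenvectorBasis i) with hvdef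
    have hv3 : (rho (starOn n) - (N * c) • 1) *ᵥ v = (t i - N * c) • v := by
      rw [sub_mulVec, hv, smul_mulVec, one_mulVec, ← sub_smul]
    have hv2 : (rho (starOn n) - c • 1) *ᵥ ((t i - N * c) • v)
        = ((t i - c) * (t i - N * c)) • v := by
      rw [mulVec_smul, sub_mulVec, hv, smul_mulVec, one_mulVec, ← sub_smul, smul_smul,
        mul_comm]
    have hv1 : rho (starOn n) *ᵥ (((t i - c) * (t i - N * c)) • v)
        = (t i * ((t i - c) * (t i - N * c))) • v := by
      rw [mulVec_smul, hv, smul_smul, mul_comm]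
    have hzero : (t i * ((t i - c) * (t i - N * c))) • v = 0 := by
      rw [← hv1, ← hv2, ← hv3, mulVec_mulVec, mulVec_mulVec, hmat, zero_mulVec]
    have hvne : v ≠ 0 := by
      have hne := hherm.eigenvectorBasis.orthonormal.ne_zero i
      intro h
      apply hne
      ext j
      exact congrFun h j
    rcases smul_eq_zero.mp hzero with h | h
    · rw [mul_assoc]; exact h
    · exact absurd h hvne
  have htri : ∀ i, t i = 0 ∨ t i = c ∨ t i = N * c := by
    intro i
    rcases mul_eq_zero.mp (hcubic i) with h | h
    · rcases mul_eq_zero.mp h with h | h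
      · exact Or.inl h
      · exact Or.inr (Or.inl (sub_eq_zero.mp h))
    · exact Or.inr (Or.inr (sub_eq_zero.mp h))
  have hNc_ne : N * c ≠ 0 := mul_ne_zero (by linarith) hcne
  have hc_ne_Nc : c ≠ N * c := by
    intro h
    have h2 : (N - 1) * c = 0 := by linarith
    rcases mul_eq_zero.mp h2 with h3 | h3
    · linarith
    · exact hcne h3
  -- the two trace equations
  have hsum1 : ∑ i, t i = 1 := by
    have h : (rho (starOn n)).trace = ∑ i, t i := by
      rw [hteq]; exact trace_eq_sum_eigs hherm
    have h2 : (rho (starOn n)).trace = 1 := by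
      rw [hrho, trace_smul, htr, smul_eq_mul, hc]
      exact inv_mul_cancel₀ hden
    rw [← h, h2]
  have hsum2 : ∑ i, t i ^ 2 = (N ^ 2 + N - 2) * c ^ 2 := by
    have h : (rho (starOn n) * rho (starOn n)).trace = ∑ i, t i ^ 2 := by
      rw [hteq]; exact trace_sq_eq_sum_eigs_sq hherm
    have hsq : rho (starOn n) * rho (starOn n) = (c * c) • (L * L) := by
      rw [hrho]
      simp only [smul_mul_assoc, mul_smul_comm, smul_smul]
    have h2 : (rho (starOn n) * rho (starOn n)).trace = (N ^ 2 + N - 2) * c ^ 2 := by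
      rw [hsq, trace_smul, smul_eq_mul, hLdef, trace_lap_sq n hn]
      push_cast [← hN]
      ring
    rw [← h, h2]
  -- indicator decompositions
  have hind1 : ∀ i, t i
      = c * (if t i = c then 1 else 0) + (N * c) * (if t i = N * c then 1 else 0) := by
    intro i
    rcases htri i with h | h | h
    · rw [h, if_neg (fun hh => hcne hh.symm), if_neg (fun hh => hNc_ne hh.symm)]; ring
    · rw [h, if_pos rfl, if_neg hc_ne_Nc]; ring
    · rw [h, if_pos rfl, if_neg (fun hh => hc_ne_Nc hh.symm)]; ring
  have hind2 : ∀ i, t i ^ 2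
      = c ^ 2 * (if t i = c then 1 else 0) + (N * c) ^ 2 * (if t i = N * c then 1 else 0) := by
    intro i
    rcases htri i with h | h | h
    · rw [h, if_neg (fun hh => hcne hh.symm), if_neg (fun hh => hNc_ne hh.symm)]; ring
    · rw [h, if_pos rfl, if_neg hc_ne_Nc]; ring
    · rw [h, if_pos rfl, if_neg (fun hh => hc_ne_Nc hh.symm)]; ring
  set k1 : ℝ := ((univ.filter (fun i => t i = c)).card : ℝ) with hk1def
  set k2 : ℝ := ((univ.filter (fun i => t i = N * c)).card : ℝ) with hk2def
  have hcard1 : ∑ i : Fin n, (if t i = c then (1:ℝ) else 0) = k1 := by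
    rw [hk1def, Finset.sum_boole]
  have hcard2 : ∑ i : Fin n, (if t i = N * c then (1:ℝ) else 0) = k2 := by
    rw [hk2def, Finset.sum_boole]
  have hEq1 : c * k1 + (N * c) * k2 = 1 := by
    calc c * k1 + (N * c) * k2
        = ∑ i, (c * (if t i = c then (1:ℝ) else 0)
            + (N * c) * (if t i = N * c then (1:ℝ) else 0)) := by
          rw [← hcard1, ← hcard2, Finset.mul_sum, Finset.mul_sum, ← Finset.sum_add_distrib]
      _ = ∑ i, t i := Finset.sum_congr rfl (fun i _ => (hind1 i).symm)
      _ = 1 := hsum1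
  have hEq2 : c ^ 2 * k1 + (N * c) ^ 2 * k2 = (N ^ 2 + N - 2) * c ^ 2 := by
    calc c ^ 2 * k1 + (N * c) ^ 2 * k2
        = ∑ i, (c ^ 2 * (if t i = c then (1:ℝ) else 0)
            + (N * c) ^ 2 * (if t i = N * c then (1:ℝ) else 0)) := by
          rw [← hcard1, ← hcard2, Finset.mul_sum, Finset.mul_sum, ← Finset.sum_add_distrib]
      _ = ∑ i, t i ^ 2 := Finset.sum_congr rfl (fun i _ => (hind2 i).symm)
      _ = (N ^ 2 + N - 2) * c ^ 2 := hsum2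
  -- solve the linear system
  have e1 : k1 + N * k2 = 2 * N - 2 := by
    have := hEq1
    rw [hc] at this
    field_simp at this
    rw [div_eq_iff (by linarith)] at this
    linarith
  have e2 : k1 + N ^ 2 * k2 = N ^ 2 + N - 2 := by
    have := hEq2
    rw [hc] at this
    field_simp at this
    rw [div_left_inj' (pow_ne_zero 2 (by linarith))] at this
    nlinarith [this]
  have hNNne : N ^ 2 - N ≠ 0 := by nlinarith
  have hk2 : k2 = 1 := by
    have h3 : (N ^ 2 - N) * k2 = (N ^ 2 - N) * 1 := by ring_nf; linear_combination e2 - e1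
    exact mul_left_cancel₀ hNNne h3
  have hk1 : k1 = N - 2 := by
    rw [hk2] at e1
    linarith
  -- compute the entropy
  have hent : ∀ i, -(t i * Real.logb 2 (t i))
      = (-(c * Real.logb 2 c)) * (if t i = c then 1 else 0)
        + (-((N * c) * Real.logb 2 (N * c))) * (if t i = N * c then 1 else 0) := by
    intro i
    rcases htri i with h | h | h
    · rw [h, if_neg (fun hh => hcne hh.symm), if_neg (fun hh => hNc_ne hh.symm)]; ring
    · rw [h, if_pos rfl, if_neg hc_ne_Nc]; ring
    · rw [h, if_pos rfl, if_neg (fun hh => hc_ne_Nc hh.symm)]; ring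
  have hvn : vnEntropy (starOn n)
      = (-(c * Real.logb 2 c)) * k1 + (-((N * c) * Real.logb 2 (N * c))) * k2 := by
    unfold vnEntropy
    rw [← htdef]
    calc ∑ i, -(t i * Real.logb 2 (t i))
        = ∑ i, ((-(c * Real.logb 2 c)) * (if t i = c then (1:ℝ) else 0)
            + (-((N * c) * Real.logb 2 (N * c))) * (if t i = N * c then (1:ℝ) else 0)) :=
          Finset.sum_congr rfl (fun i _ => hent i)
      _ = (-(c * Real.logb 2 c)) * k1 + (-((N * c) * Real.logb 2 (N * c))) * k2 := by
          rw [← hcard1, ← hcard2, Finset.mul_sum, Finset.mul_sum, ← Finset.sum_add_distrib]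
  rw [hvn, hk1, hk2]
  have hlogc : Real.logb 2 c = -Real.logb 2 (2 * N - 2) := by
    rw [hc, Real.logb_inv]
  have hNc : N * c = N / (2 * N - 2) := by
    rw [hc, div_eq_mul_inv]
  have hlogNc : Real.logb 2 (N * c) = Real.logb 2 N - Real.logb 2 (2 * N - 2) := by
    rw [hNc, Real.logb_div (by linarith) hden]
  rw [hlogc, hlogNc, hNc, hc]
  have hN1 : N - 1 ≠ 0 := by linarith
  field_simp
  ring

end VNE
end

section
/- Let α > 1 be a real number, n ≥ 2 an integer, and let G be any finite simple graph on n vertices with at least one edge. Then H_α(G) ≤ log₂(n−1), and the complete graph K_n attains this value: H_α(K_n) = log₂(n−1). -/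
open Matrix Real Finset

namespace VNE

variable {V : Type*} [Fintype V] [DecidableEq V]

/-- The trace of a real symmetric matrix equals the sum of its eigenvalues. -/
lemma trace_eq_sum_eigenvalues {m : Type*} [Fintype m] [DecidableEq m] {A : Matrix m m ℝ}
    (hA : A.IsHermitian) : A.trace = ∑ i, hA.eigenvalues i := by
  exact hA.trace_eq_sum_eigenvalues

lemma lapTrace_eq (G : SimpleGraph V) [DecidableRel G.Adj] :
    (G.lapMatrix ℝ).trace = ∑ v, (G.degree v : ℝ) := by
  unfold Matrix.trace
  refine Finset.sum_congr rfl fun v _ => ?_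
  simp [Matrix.diag, SimpleGraph.lapMatrix, SimpleGraph.degMatrix]

lemma lapTrace_pos (G : SimpleGraph V) [DecidableRel G.Adj] (hG : G.edgeSet.Nonempty) :
    0 < (G.lapMatrix ℝ).trace := by
  rw [lapTrace_eq]
  obtain ⟨e, he⟩ := hG
  induction e using Sym2.ind with
  | _ u w =>
    have hadj : G.Adj u w := (SimpleGraph.mem_edgeSet G).mp he
    have hd : 0 < G.degree u := by
      rw [SimpleGraph.degree_pos_iff_exists_adj]
      exact ⟨w, hadj⟩
    have h1 : (1 : ℝ) ≤ (G.degree u : ℝ) := by exact_mod_cast hd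
    calc (0:ℝ) < (G.degree u : ℝ) := by linarith
    _ ≤ ∑ v, (G.degree v : ℝ) :=
        Finset.single_le_sum (f := fun v => (G.degree v : ℝ))
          (fun v _ => by positivity) (Finset.mem_univ u)

lemma sum_eigs_eq_one (G : SimpleGraph V) (hG : G.edgeSet.Nonempty) :
    ∑ v, eigs G v = 1 := by
  letI := Classical.decRel G.Adj
  have ht : 0 < (G.lapMatrix ℝ).trace := lapTrace_pos G hG
  unfold eigs
  rw [← trace_eq_sum_eigenvalues (rho_isHermitian G)]
  show (rho G).trace = 1
  unfold rho
  rw [Matrix.trace_smul, smul_eq_mul, inv_mul_cancel₀ ht.ne']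

lemma rho_posSemidef (G : SimpleGraph V) (hG : G.edgeSet.Nonempty) :
    (rho G).PosSemidef := by
  letI := Classical.decRel G.Adj
  have ht : 0 < (G.lapMatrix ℝ).trace := lapTrace_pos G hG
  have hP := SimpleGraph.posSemidef_lapMatrix ℝ G
  refine ⟨rho_isHermitian G, fun x => ?_⟩
  exact (hP.smul (inv_nonneg.mpr ht.le)).2 x

lemma eigs_nonneg (G : SimpleGraph V) (hG : G.edgeSet.Nonempty) (v : V) :
    0 ≤ eigs G v :=
  (rho_posSemidef G hG).eigenvalues_nonneg v

lemma exists_eigs_zero [Nonempty V] (G : SimpleGraph V) : ∃ v, eigs G v = 0 := by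
  letI := Classical.decRel G.Adj
  have h1 : rho G *ᵥ (fun _ => 1) = 0 := by
    show (((G.lapMatrix ℝ).trace)⁻¹ • G.lapMatrix ℝ) *ᵥ (fun _ => (1:ℝ)) = 0
    rw [Matrix.smul_mulVec, SimpleGraph.lapMatrix_mulVec_const_eq_zero, smul_zero]
  have hne : (fun _ => (1:ℝ)) ≠ (0 : V → ℝ) := by
    intro h
    have := congrFun h (Classical.arbitrary V)
    simp at this
  have hdet : (rho G).det = 0 :=
    (Matrix.exists_mulVec_eq_zero_iff).mp ⟨_, hne, h1⟩
  have := (rho_isHermitian G).det_eq_prod_eigenvalues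
  rw [hdet] at this
  have hprod : ∏ i, eigs G i = 0 := by
    unfold eigs
    exact_mod_cast this.symm
  obtain ⟨v, _, hv⟩ := Finset.prod_eq_zero_iff.mp hprod
  exact ⟨v, hv⟩

lemma key_ineq {n : ℕ} (hn : 2 ≤ n) {α : ℝ} (hα : 1 < α) (f : Fin n → ℝ)
    (hf0 : ∀ v, 0 ≤ f v) (hf1 : ∑ v, f v = 1) (v₀ : Fin n) (hv₀ : f v₀ = 0) :
    ((n:ℝ) - 1) ^ (1 - α) ≤ ∑ v, f v ^ α := by
  have hnpos : (0:ℝ) < (n:ℝ) - 1 := by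
    have : (2:ℝ) ≤ (n:ℝ) := by exact_mod_cast hn
    linarith
  set s : Finset (Fin n) := Finset.univ.erase v₀ with hs
  have hcard : (s.card : ℝ) = (n:ℝ) - 1 := by
    rw [hs, Finset.card_erase_of_mem (Finset.mem_univ v₀)]
    simp only [Finset.card_univ, Fintype.card_fin]
    have : 1 ≤ n := by omega
    push_cast [Nat.cast_sub this]
    ring
  have hsum_s : ∑ v ∈ s, f v = 1 := by
    rw [hs, Finset.sum_erase _ hv₀, hf1]
  have key := Real.rpow_arith_mean_le_arith_mean_rpow s (fun _ => ((n:ℝ)-1)⁻¹) f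
    (fun _ _ => by positivity) (by rw [Finset.sum_const, nsmul_eq_mul, hcard,
      mul_inv_cancel₀ hnpos.ne']) (fun i _ => hf0 i) hα.le
  have hL : ∑ i ∈ s, ((n:ℝ)-1)⁻¹ * f i = ((n:ℝ)-1)⁻¹ := by
    rw [← Finset.mul_sum, hsum_s, mul_one]
  have hR : ∑ i ∈ s, ((n:ℝ)-1)⁻¹ * f i ^ α = ((n:ℝ)-1)⁻¹ * ∑ i ∈ s, f i ^ α := by
    rw [Finset.mul_sum]
  rw [hL, hR] at key
  have hfull : ∑ v, f v ^ α = ∑ i ∈ s, f i ^ α := by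
    rw [hs, Finset.sum_erase]
    rw [hv₀, Real.zero_rpow (by linarith)]
  rw [hfull]
  have h2 : ((n:ℝ)-1) * (((n:ℝ)-1)⁻¹ ^ α) ≤ ∑ i ∈ s, f i ^ α := by
    calc ((n:ℝ)-1) * (((n:ℝ)-1)⁻¹ ^ α)
        ≤ ((n:ℝ)-1) * (((n:ℝ)-1)⁻¹ * ∑ i ∈ s, f i ^ α) :=
          mul_le_mul_of_nonneg_left key hnpos.le
      _ = ∑ i ∈ s, f i ^ α := by
          rw [← mul_assoc, mul_inv_cancel₀ hnpos.ne', one_mul]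
  refine le_trans (le_of_eq ?_) h2
  rw [Real.inv_rpow hnpos.le, ← Real.rpow_neg hnpos.le]
  rw [← Real.rpow_one_add' hnpos.le (by intro h; linarith)]
  congr 1

lemma top_edge {n : ℕ} (hn : 2 ≤ n) : (⊤ : SimpleGraph (Fin n)).edgeSet.Nonempty := by
  refine ⟨s(⟨0, by omega⟩, ⟨1, by omega⟩), ?_⟩
  rw [SimpleGraph.mem_edgeSet]
  simp [SimpleGraph.top_adj]

lemma rho_top_sq {n : ℕ} (hn : 2 ≤ n) :
    rho (⊤ : SimpleGraph (Fin n)) * rho ⊤ = ((n:ℝ)-1)⁻¹ • rho ⊤ := by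
  letI := Classical.decRel (⊤ : SimpleGraph (Fin n)).Adj
  have hn1 : (0:ℝ) < (n:ℝ) - 1 := by
    have : (2:ℝ) ≤ (n:ℝ) := by exact_mod_cast hn
    linarith
  have hn0 : (0:ℝ) < (n:ℝ) := by positivity
  set L := (⊤ : SimpleGraph (Fin n)).lapMatrix ℝ with hLdef
  have hL : ∀ i j, L i j = if i = j then (n:ℝ)-1 else -1 := by
    intro i j
    by_cases h : i = j
    · subst h
      have hdeg : (⊤ : SimpleGraph (Fin n)).degree i = n - 1 := by
        have h := SimpleGraph.complete_graph_degree (V := Fin n) i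
        rw [Fintype.card_fin] at h
        convert h using 2
      simp [hLdef, SimpleGraph.lapMatrix, SimpleGraph.degMatrix, hdeg,
        Nat.cast_sub (by omega : 1 ≤ n)]
    · simp [hLdef, SimpleGraph.lapMatrix, SimpleGraph.degMatrix, Matrix.diagonal, h,
        SimpleGraph.adjMatrix, Ne.symm h]
  set J : Matrix (Fin n) (Fin n) ℝ := Matrix.of (fun _ _ => 1) with hJdef
  have hJ2 : J * J = (n:ℝ) • J := by
    ext i j
    simp [hJdef, Matrix.mul_apply]
  have hLJ : L = (n:ℝ) • 1 - J := by
    ext i j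
    rw [hL]
    by_cases h : i = j <;> simp [hJdef, Matrix.one_apply, h]
  have hmul : L * L = (n:ℝ) • L := by
    rw [hLJ, sub_mul, mul_sub, mul_sub, hJ2]
    simp only [Matrix.smul_mul, Matrix.mul_smul, Matrix.one_mul, Matrix.mul_one, smul_smul,
      smul_sub]
    abel
  have htr : L.trace = (n:ℝ) * ((n:ℝ) - 1) := by
    unfold Matrix.trace
    simp only [Matrix.diag]
    rw [Finset.sum_congr rfl (fun i _ => by rw [hL i i, if_pos rfl])]
    rw [Finset.sum_const, Finset.card_univ, Fintype.card_fin, nsmul_eq_mul]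
  show (L.trace⁻¹ • L) * (L.trace⁻¹ • L) = ((n:ℝ)-1)⁻¹ • (L.trace⁻¹ • L)
  rw [Matrix.smul_mul, Matrix.mul_smul, hmul, smul_smul, smul_smul, smul_smul, htr]
  congr 1
  field_simp

lemma eigs_top_dichotomy {n : ℕ} (hn : 2 ≤ n) (i : Fin n) :
    eigs (⊤ : SimpleGraph (Fin n)) i = 0 ∨
    eigs (⊤ : SimpleGraph (Fin n)) i = ((n:ℝ)-1)⁻¹ := by
  have hH := rho_isHermitian (⊤ : SimpleGraph (Fin n))
  suffices h : hH.eigenvalues i = 0 ∨ hH.eigenvalues i = ((n:ℝ)-1)⁻¹ from h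
  have h1 := hH.mulVec_eigenvectorBasis i
  have h2 : (rho ⊤ * rho ⊤) *ᵥ ⇑(hH.eigenvectorBasis i)
      = (hH.eigenvalues i * hH.eigenvalues i) • ⇑(hH.eigenvectorBasis i) := by
    rw [← Matrix.mulVec_mulVec, h1, Matrix.mulVec_smul, h1, smul_smul]
  rw [rho_top_sq hn, Matrix.smul_mulVec, h1, smul_smul] at h2
  have hv : ⇑(hH.eigenvectorBasis i) ≠ (0 : Fin n → ℝ) := by
    intro h
    apply hH.eigenvectorBasis.orthonormal.ne_zero i
    ext j
    exact congrFun h j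
  have hscal : ((n:ℝ)-1)⁻¹ * hH.eigenvalues i = hH.eigenvalues i * hH.eigenvalues i := by
    have hsub : (((n:ℝ)-1)⁻¹ * hH.eigenvalues i - hH.eigenvalues i * hH.eigenvalues i)
        • ⇑(hH.eigenvectorBasis i) = 0 := by
      rw [sub_smul, h2, sub_self]
    rcases smul_eq_zero.mp hsub with h | h
    · linarith [h]
    · exact absurd h hv
  by_cases h0 : hH.eigenvalues i = 0
  · exact Or.inl h0
  · exact Or.inr (mul_right_cancel₀ h0 hscal).symm

theorem renyi_max_complete {n : ℕ} (hn : 2 ≤ n) (α : ℝ) (hα : 1 < α)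
    (G : SimpleGraph (Fin n)) (hG : G.edgeSet.Nonempty) :
    renyiEntropy α G ≤ Real.logb 2 ((n : ℝ) - 1) ∧
    renyiEntropy α (⊤ : SimpleGraph (Fin n)) = Real.logb 2 ((n : ℝ) - 1) := by
  have hnpos : (0:ℝ) < (n:ℝ) - 1 := by
    have : (2:ℝ) ≤ (n:ℝ) := by exact_mod_cast hn
    linarith
  have h1α : 1 - α < 0 := by linarith
  have hne : (1:ℝ) - α ≠ 0 := by linarith
  have hlog : Real.logb 2 (((n:ℝ)-1) ^ (1-α)) = (1-α) * Real.logb 2 ((n:ℝ)-1) := by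
    unfold Real.logb
    rw [Real.log_rpow hnpos]
    ring
  constructor
  · haveI : Nonempty (Fin n) := ⟨⟨0, by omega⟩⟩
    obtain ⟨v₀, hv₀⟩ := exists_eigs_zero G
    have hS := key_ineq hn hα (eigs G) (eigs_nonneg G hG) (sum_eigs_eq_one G hG) v₀ hv₀
    unfold renyiEntropy
    have hmono : Real.logb 2 (((n:ℝ)-1)^(1-α)) ≤ Real.logb 2 (∑ v, eigs G v ^ α) :=
      Real.logb_le_logb_of_le (by norm_num) (Real.rpow_pos_of_pos hnpos _) hS
    have hc : 1/(1-α) < 0 := div_neg_of_pos_of_neg one_pos h1α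
    calc (1/(1-α)) * Real.logb 2 (∑ v, eigs G v ^ α)
        ≤ (1/(1-α)) * Real.logb 2 (((n:ℝ)-1)^(1-α)) :=
          mul_le_mul_of_nonpos_left hmono hc.le
      _ = Real.logb 2 ((n:ℝ)-1) := by
          rw [hlog, one_div, inv_mul_cancel_left₀ hne]
  · have hcinv : (0:ℝ) < ((n:ℝ)-1)⁻¹ := by positivity
    have hsum : ∑ v, eigs (⊤ : SimpleGraph (Fin n)) v ^ α = ((n:ℝ)-1)^(1-α) := by
      have hpt : ∀ v, eigs (⊤ : SimpleGraph (Fin n)) v ^ α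
          = eigs (⊤ : SimpleGraph (Fin n)) v * (((n:ℝ)-1)⁻¹) ^ (α-1) := by
        intro v
        rcases eigs_top_dichotomy hn v with h | h
        · rw [h, Real.zero_rpow (by linarith), zero_mul]
        · rw [h, ← Real.rpow_one_add' hcinv.le (by intro h'; linarith)]
          congr 1
          ring
      rw [Finset.sum_congr rfl (fun v _ => hpt v), ← Finset.sum_mul,
        sum_eigs_eq_one ⊤ (top_edge hn), one_mul]
      rw [Real.inv_rpow hnpos.le, ← Real.rpow_neg hnpos.le]
      congr 1
      ring
    unfold renyiEntropy
    rw [hsum, hlog, one_div, inv_mul_cancel_left₀ hne]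


end VNE
end
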